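/- Let n ≥ 1 and let f : ℝⁿ → ℝ be twice continuously differentiable in a neighborhood of a point x ∈ ℝⁿ. Then as ε → 0⁺, ⨍_{B_ε(x)} f(y) dy = f(x) + (ε²/(2(n+2))) · Δf(x) + o(ε²). -/

import Mathlib

open MeasureTheory Metric Set Filter Asymptotics Topology
open scoped ENNReal

/-!
Subtracting the second-order Taylor polynomial of `f` at `x` leaves a remainder that is
`o(‖y - x‖²)` (mean value inequality applied to its derivative, which is `o(‖y - x‖)`), so its
average over `B_ε(x)` is `o(ε²)`. The average of the Taylor polynomial is computed by symmetry of
the ball: the linear term and the mixed products `yᵢ yⱼ` (`i ≠ j`) change sign under a reflection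
and average to zero, the squares `yᵢ²` all have the same average by permuting coordinates, and
their sum `‖y‖²` averages to `n ε² / (n + 2)` in polar coordinates.
-/

section Taylor

variable {E F : Type*} [NormedAddCommGroup E] [NormedSpace ℝ E]
  [NormedAddCommGroup F] [NormedSpace ℝ F]

theorem isLittleO_sub_pow_succ_of_eventually_hasFDerivAt {R : E → F} {R' : E → E →L[ℝ] F}
    {x : E} {k : ℕ} (hR : ∀ᶠ y in 𝓝 x, HasFDerivAt R (R' y) y)
    (hR' : R' =o[𝓝 x] fun y => ‖y - x‖ ^ k) :
    (fun y => R y - R x) =o[𝓝 x] fun y => ‖y - x‖ ^ (k + 1) := by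
  refine isLittleO_iff.2 fun c hc => ?_
  obtain ⟨r, hr, hball⟩ :=
    Metric.eventually_nhds_iff_ball.1 (hR.and (isLittleO_iff.1 hR' hc))
  filter_upwards [ball_mem_nhds x hr] with y hy
  have hsub : closedBall x ‖y - x‖ ⊆ ball x r :=
    closedBall_subset_ball (by rwa [← dist_eq_norm, ← mem_ball])
  have hbound : ∀ z ∈ closedBall x ‖y - x‖, ‖R' z‖ ≤ c * ‖y - x‖ ^ k := by
    intro z hz
    calc ‖R' z‖ ≤ c * ‖‖z - x‖ ^ k‖ := (hball z (hsub hz)).2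
      _ ≤ c * ‖y - x‖ ^ k := by
        rw [norm_pow, norm_norm, ← dist_eq_norm]
        gcongr
        exact hz
  have hmvt := (convex_closedBall x ‖y - x‖).norm_image_sub_le_of_norm_hasFDerivWithin_le
    (fun z hz => (hball z (hsub hz)).1.hasFDerivWithinAt) hbound
    (mem_closedBall_self (norm_nonneg _)) (by rw [mem_closedBall, dist_eq_norm])
  rw [norm_pow, norm_norm, pow_succ, ← mul_assoc]
  exact hmvt

theorem ContinuousLinearMap.hasFDerivAt_apply_sub_apply_sub (b : E →L[ℝ] E →L[ℝ] F) (x z : E) :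
    HasFDerivAt (fun y => b (y - x) (y - x)) (b (z - x) + b.flip (z - x)) z := by
  have hsub : HasFDerivAt (fun y => y - x) (ContinuousLinearMap.id ℝ E) z :=
    (hasFDerivAt_id z).sub_const x
  refine ((b.hasFDerivAt.comp z hsub).clm_apply hsub).congr_fderiv ?_
  ext w
  simp

theorem ContDiffAt.isLittleO_taylor_two {f : E → F} {x : E} (hf : ContDiffAt ℝ 2 f x) :
    (fun y => f y - f x - fderiv ℝ f x (y - x)
      - (1 / 2 : ℝ) • fderiv ℝ (fderiv ℝ f) x (y - x) (y - x))
      =o[𝓝 x] fun y => ‖y - x‖ ^ 2 := by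
  set b := fderiv ℝ (fderiv ℝ f) x
  have hsymm : ∀ v w, b v w = b w v := hf.isSymmSndFDerivAt (by simp)
  have hder : ∀ᶠ y in 𝓝 x, HasFDerivAt f (fderiv ℝ f y) y :=
    (hf.eventually (by simp)).mono fun y hy =>
      (hy.differentiableAt (by simp)).hasFDerivAt
  have hf' : (fun y => fderiv ℝ f y - fderiv ℝ f x - b (y - x)) =o[𝓝 x] fun y => ‖y - x‖ ^ 1 := by
    simpa only [pow_one, isLittleO_norm_right] using
      ((hf.fderiv_right (m := 1) (by norm_num)).differentiableAt
        (by simp)).hasFDerivAt.isLittleO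
  have hR : ∀ᶠ z in 𝓝 x, HasFDerivAt (fun y => f y - f x - fderiv ℝ f x (y - x)
      - (1 / 2 : ℝ) • b (y - x) (y - x)) (fderiv ℝ f z - fderiv ℝ f x - b (z - x)) z := by
    filter_upwards [hder] with z hz
    have hquad := (b.hasFDerivAt_apply_sub_apply_sub x z).const_smul (1 / 2 : ℝ)
    have hlin := (fderiv ℝ f x).hasFDerivAt.comp z ((hasFDerivAt_id z).sub_const x)
    refine (((hz.sub_const (f x)).sub hlin).sub hquad).congr_fderiv ?_
    ext w
    simp [hsymm w]
    module
  simpa using isLittleO_sub_pow_succ_of_eventually_hasFDerivAt hR hf'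

end Taylor

theorem ContinuousOn.integrableOn_ball {X F : Type*} [MetricSpace X] [ProperSpace X]
    [MeasurableSpace X] [OpensMeasurableSpace X] {μ : Measure X} [IsFiniteMeasureOnCompacts μ]
    [NormedAddCommGroup F] {g : X → F} {x : X} {r : ℝ}
    (hg : ContinuousOn g (closedBall x r)) : IntegrableOn g (ball x r) μ :=
  (hg.integrableOn_compact (isCompact_closedBall x r)).mono_set ball_subset_closedBall

section Average

variable {X F : Type*} [MeasurableSpace X] {μ : Measure X}
  [NormedAddCommGroup F] [NormedSpace ℝ F]

theorem norm_setAverage_le_of_norm_le {s : Set X} {g : X → F} {C : ℝ} (hs : μ s ≠ ∞)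
    (hC : 0 ≤ C) (hg : ∀ y ∈ s, ‖g y‖ ≤ C) : ‖⨍ y in s, g y ∂μ‖ ≤ C := by
  rw [setAverage_eq, norm_smul, norm_inv, Real.norm_of_nonneg measureReal_nonneg]
  rcases eq_or_ne (μ.real s) 0 with hs₀ | hs₀
  · simpa [hs₀] using hC
  calc (μ.real s)⁻¹ * ‖∫ y in s, g y ∂μ‖ ≤ (μ.real s)⁻¹ * (C * μ.real s) := by
        gcongr
        exact norm_setIntegral_le_of_norm_le_const hs.lt_top hg
    _ = C := by field_simp

theorem setAverage_sub {s : Set X} {f g : X → F} (hf : IntegrableOn f s μ)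
    (hg : IntegrableOn g s μ) :
    ⨍ y in s, (f y - g y) ∂μ = ⨍ y in s, f y ∂μ - ⨍ y in s, g y ∂μ := by
  simp only [setAverage_eq, integral_sub hf hg, smul_sub]

theorem isLittleO_setAverage_ball [PseudoMetricSpace X] [ProperSpace X]
    [IsFiniteMeasureOnCompacts μ] {g : X → F} {x : X} {k : ℕ}
    (hg : g =o[𝓝 x] fun y => dist y x ^ k) :
    (fun ε : ℝ => ⨍ y in ball x ε, g y ∂μ) =o[𝓝[>] 0] fun ε => ε ^ k := by
  refine isLittleO_iff.2 fun c hc => ?_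
  obtain ⟨r, hr, hball⟩ := Metric.eventually_nhds_iff_ball.1 (isLittleO_iff.1 hg hc)
  filter_upwards [Ioo_mem_nhdsGT hr] with ε ⟨hε, hεr⟩
  rw [norm_pow, Real.norm_of_nonneg hε.le]
  refine norm_setAverage_le_of_norm_le measure_ball_lt_top.ne (by positivity) fun y hy => ?_
  calc ‖g y‖ ≤ c * ‖dist y x ^ k‖ := hball y (ball_subset_ball hεr.le hy)
    _ ≤ c * ε ^ k := by
      rw [norm_pow, Real.norm_of_nonneg dist_nonneg]
      gcongr
      exact (mem_ball.1 hy).le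

end Average

section BallIntegrals

variable {E F : Type*} [NormedAddCommGroup E] [MeasurableSpace E] [BorelSpace E]
  [NormedAddCommGroup F] [NormedSpace ℝ F]

theorem setAverage_ball_comp_sub (μ : Measure E) [μ.IsAddHaarMeasure] (h : E → F) (x : E) (ε : ℝ) :
    ⨍ y in ball x ε, h (y - x) ∂μ = ⨍ z in ball 0 ε, h z ∂μ := by
  have hpre : (fun y => y - x) ⁻¹' ball 0 ε = ball x ε := by
    ext y
    simp [dist_eq_norm]
  rw [setAverage_eq, setAverage_eq, Measure.real, Measure.real, Measure.addHaar_ball_center,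
    ← hpre, (measurePreserving_sub_right μ x).setIntegral_preimage_emb
      (Homeomorph.subRight x).measurableEmbedding]

theorem integral_ball_norm_sq [NormedSpace ℝ E] [FiniteDimensional ℝ E] [Nontrivial E]
    (μ : Measure E) [μ.IsAddHaarMeasure] {ε : ℝ} (hε : 0 ≤ ε) :
    ∫ z in ball (0 : E) ε, ‖z‖ ^ 2 ∂μ
      = Module.finrank ℝ E / (Module.finrank ℝ E + 2) * ε ^ 2 * μ.real (ball 0 ε) := by
  set d := Module.finrank ℝ E
  have hd : 1 ≤ d := Module.finrank_pos
  have hindicator : (ball (0 : E) ε).indicator (fun z => ‖z‖ ^ 2)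
      = fun z => (Iio ε).indicator (fun r => r ^ 2) ‖z‖ := by
    ext z
    simp only [indicator, mem_ball_zero_iff, mem_Iio]
  have hradial : ∀ r ∈ Ioi (0 : ℝ), r ^ (d - 1) • (Iio ε).indicator (fun r => r ^ 2) r
      = (Iio ε).indicator (fun r => r ^ (d + 1)) r := by
    intro r _
    by_cases hr : r < ε
    · simp only [indicator_of_mem (mem_Iio.2 hr), smul_eq_mul, ← pow_add]
      congr 1
      omega
    · simp [indicator_of_notMem (show r ∉ Iio ε from hr)]
  have hvol : μ.real (ball 0 ε) = ε ^ d * μ.real (ball 0 1) := by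
    rw [Measure.real, Measure.addHaar_ball μ 0 hε, ENNReal.toReal_mul,
      ENNReal.toReal_ofReal (by positivity), Measure.real]
  rw [← integral_indicator measurableSet_ball, hindicator, integral_fun_norm_addHaar,
    setIntegral_congr_fun measurableSet_Ioi hradial, setIntegral_indicator measurableSet_Iio,
    Ioi_inter_Iio, ← integral_Ioc_eq_integral_Ioo, ← intervalIntegral.integral_of_le hε,
    integral_pow, hvol]
  simp only [nsmul_eq_mul, smul_eq_mul]
  push_cast
  field_simp
  ring

variable [InnerProductSpace ℝ E] [FiniteDimensional ℝ E]

theorem integral_ball_comp_linearIsometryEquiv (T : E ≃ₗᵢ[ℝ] E) (h : E → F) (ε : ℝ) :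
    ∫ z in ball 0 ε, h (T z) = ∫ z in ball 0 ε, h z := by
  have hpre : T ⁻¹' ball 0 ε = ball 0 ε := by
    rw [T.preimage_ball, map_zero]
  rw [← T.measurePreserving.setIntegral_preimage_emb T.toHomeomorph.measurableEmbedding h, hpre]

theorem integral_ball_eq_zero_of_comp_eq_neg (T : E ≃ₗᵢ[ℝ] E) {h : E → F}
    (hT : ∀ z, h (T z) = -h z) (ε : ℝ) : ∫ z in ball 0 ε, h z = 0 := by
  have hcomp := integral_ball_comp_linearIsometryEquiv T h ε
  simp only [hT, integral_neg] at hcomp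
  have : IsAddTorsionFree F := .of_isTorsionFree ℝ F
  exact self_eq_neg.1 hcomp.symm

theorem integral_ball_continuousLinearMap (L : E →L[ℝ] F) (ε : ℝ) :
    ∫ z in ball 0 ε, L z = 0 :=
  integral_ball_eq_zero_of_comp_eq_neg (LinearIsometryEquiv.neg ℝ) (fun z => map_neg L z) ε

end BallIntegrals

section EuclideanSpace

variable {n : ℕ} {F : Type*} [NormedAddCommGroup F] [NormedSpace ℝ F] [CompleteSpace F]

theorem integral_ball_coord_sq_eq (i j : Fin n) (ε : ℝ) :
    ∫ z in ball (0 : EuclideanSpace ℝ (Fin n)) ε, z i ^ 2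
      = ∫ z in ball (0 : EuclideanSpace ℝ (Fin n)) ε, z j ^ 2 := by
  rw [← integral_ball_comp_linearIsometryEquiv
    (LinearIsometryEquiv.piLpCongrLeft 2 ℝ ℝ (Equiv.swap i j))]
  simp [LinearIsometryEquiv.piLpCongrLeft_apply, Equiv.swap_apply_left]

theorem integral_ball_coord_sq (i : Fin n) {ε : ℝ} (hε : 0 ≤ ε) :
    ∫ z in ball (0 : EuclideanSpace ℝ (Fin n)) ε, z i ^ 2
      = ε ^ 2 / (n + 2) * volume.real (ball (0 : EuclideanSpace ℝ (Fin n)) ε) := by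
  have : Nontrivial (EuclideanSpace ℝ (Fin n)) := ⟨⟨EuclideanSpace.single i 1, 0, by simp⟩⟩
  have hn : (n : ℝ) ≠ 0 := Nat.cast_ne_zero.2 (Fin.pos i).ne'
  have hsum : (n : ℝ) * ∫ z in ball (0 : EuclideanSpace ℝ (Fin n)) ε, z i ^ 2
      = ∫ z in ball (0 : EuclideanSpace ℝ (Fin n)) ε, ‖z‖ ^ 2 := by
    simp_rw [EuclideanSpace.real_norm_sq_eq]
    rw [integral_finsetSum _ fun j _ =>
      ((EuclideanSpace.proj j).continuous.pow 2).continuousOn.integrableOn_ball]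
    simp [integral_ball_coord_sq_eq _ i]
  apply mul_left_cancel₀ hn
  rw [hsum, integral_ball_norm_sq volume hε, finrank_euclideanSpace_fin]
  field_simp

theorem integral_ball_coord_mul_coord {i j : Fin n} (hij : i ≠ j) (ε : ℝ) :
    ∫ z in ball (0 : EuclideanSpace ℝ (Fin n)) ε, z i * z j = 0 := by
  classical
  let reflect : (k : Fin n) → ℝ ≃ₗᵢ[ℝ] ℝ := fun k =>
    if k = i then LinearIsometryEquiv.neg ℝ else LinearIsometryEquiv.refl ℝ ℝ
  refine integral_ball_eq_zero_of_comp_eq_neg (LinearIsometryEquiv.piLpCongrRight 2 reflect)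
    (fun z => ?_) ε
  simp [reflect, LinearIsometryEquiv.piLpCongrRight_apply, hij.symm]

theorem integral_ball_apply_self
    (b : EuclideanSpace ℝ (Fin n) →L[ℝ] EuclideanSpace ℝ (Fin n) →L[ℝ] F) {ε : ℝ} (hε : 0 ≤ ε) :
    ∫ z in ball (0 : EuclideanSpace ℝ (Fin n)) ε, b z z
      = (ε ^ 2 / (n + 2) * volume.real (ball (0 : EuclideanSpace ℝ (Fin n)) ε)) •
        ∑ i, b (EuclideanSpace.single i 1) (EuclideanSpace.single i 1) := by
  have hexpand : ∀ z : EuclideanSpace ℝ (Fin n), b z z = ∑ i, ∑ j,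
      (z i * z j) • b (EuclideanSpace.single i 1) (EuclideanSpace.single j 1) := by
    intro z
    conv_lhs => rw [← (EuclideanSpace.basisFun (Fin n) ℝ).sum_repr z]
    simp [Finset.smul_sum, smul_smul]
    rw [Finset.sum_comm]
    simp only [mul_comm]
  have hint : ∀ i j, IntegrableOn (fun z : EuclideanSpace ℝ (Fin n) =>
      (z i * z j) • b (EuclideanSpace.single i 1) (EuclideanSpace.single j 1)) (ball 0 ε) :=
    fun i j => (((EuclideanSpace.proj i).continuous.mul (EuclideanSpace.proj j).continuous).smul
      continuous_const).continuousOn.integrableOn_ball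
  rw [funext hexpand, integral_finsetSum _ fun i _ => integrable_finsetSum _ fun j _ => hint i j,
    Finset.smul_sum]
  refine Finset.sum_congr rfl fun i _ => ?_
  rw [integral_finsetSum _ fun j _ => hint i j, Finset.sum_eq_single i]
  · simp_rw [integral_smul_const, ← sq, integral_ball_coord_sq i hε]
  · intro j _ hji
    rw [integral_smul_const, integral_ball_coord_mul_coord hji.symm, zero_smul]
  · simp

theorem setAverage_ball_taylor_two (c : F) (L : EuclideanSpace ℝ (Fin n) →L[ℝ] F)
    (b : EuclideanSpace ℝ (Fin n) →L[ℝ] EuclideanSpace ℝ (Fin n) →L[ℝ] F)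
    (x : EuclideanSpace ℝ (Fin n)) {ε : ℝ} (hε : 0 < ε) :
    ⨍ y in ball x ε, (c + L (y - x) + (1 / 2 : ℝ) • b (y - x) (y - x))
      = c + (ε ^ 2 / (2 * ((n : ℝ) + 2))) •
        ∑ i, b (EuclideanSpace.single i 1) (EuclideanSpace.single i 1) := by
  have hvol : volume.real (ball (0 : EuclideanSpace ℝ (Fin n)) ε) ≠ 0 :=
    (ENNReal.toReal_pos (measure_ball_pos volume 0 hε).ne' measure_ball_lt_top.ne).ne'
  have hc : IntegrableOn (fun _ => c) (ball (0 : EuclideanSpace ℝ (Fin n)) ε) :=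
    continuousOn_const.integrableOn_ball
  have hL : IntegrableOn L (ball 0 ε) := L.continuous.continuousOn.integrableOn_ball
  have hb : IntegrableOn (fun z => (1 / 2 : ℝ) • b z z) (ball 0 ε) :=
    (by fun_prop : Continuous fun z => (1 / 2 : ℝ) • b z z).continuousOn.integrableOn_ball
  rw [setAverage_ball_comp_sub volume (fun z => c + L z + (1 / 2 : ℝ) • b z z), setAverage_eq,
    integral_add (f := fun z => c + L z) (hc.add hL) hb, integral_add (f := fun _ => c) hc hL,
    setIntegral_const, integral_ball_continuousLinearMap, integral_smul,
    integral_ball_apply_self b hε.le]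
  rw [add_zero, smul_add, smul_smul, smul_smul, smul_smul, inv_mul_cancel₀ hvol, one_smul]
  congr 2
  field_simp

end EuclideanSpace

theorem average_over_ball_expansion_general
    (n : ℕ) (f : EuclideanSpace ℝ (Fin n) → ℝ)
    (x : EuclideanSpace ℝ (Fin n))
    (U : Set (EuclideanSpace ℝ (Fin n))) (hU : U ∈ nhds x) (hf : ContDiffOn ℝ 2 f U) :
    (fun ε : ℝ =>
      (⨍ y in ball x ε, f y) -
        (f x + ε ^ 2 / (2 * ((n : ℝ) + 2)) *
          ∑ i : Fin n, fderiv ℝ (fderiv ℝ f) x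
            (EuclideanSpace.single i 1) (EuclideanSpace.single i 1)))
      =o[𝓝[>] (0 : ℝ)] (fun ε => ε ^ 2) := by
  obtain ⟨r, hr, hrU⟩ := nhds_basis_closedBall.mem_iff.1 hU
  set P := fun y => f x + fderiv ℝ f x (y - x)
    + (1 / 2 : ℝ) • fderiv ℝ (fderiv ℝ f) x (y - x) (y - x)
  have hremainder : (fun ε : ℝ => ⨍ y in ball x ε, (f y - P y)) =o[𝓝[>] 0] fun ε => ε ^ 2 :=
    isLittleO_setAverage_ball (by
      simpa only [dist_eq_norm, P, sub_sub] using (hf.contDiffAt hU).isLittleO_taylor_two)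
  refine hremainder.congr' ?_ EventuallyEq.rfl
  filter_upwards [Ioo_mem_nhdsGT hr] with ε ⟨hε, hεr⟩
  have hfint : IntegrableOn f (ball x ε) :=
    (hf.continuousOn.mono ((closedBall_subset_closedBall hεr.le).trans hrU)).integrableOn_ball
  have hPint : IntegrableOn P (ball x ε) :=
    (by fun_prop : Continuous P).continuousOn.integrableOn_ball
  rw [setAverage_sub hfint hPint, setAverage_ball_taylor_two _ _ _ x hε, smul_eq_mul]

/-- For `f` twice continuously differentiable near `x`, as `ε → 0⁺`,
`⨍_{B_ε(x)} f = f(x) + ε²/(2(n+2)) Δf(x) + o(ε²)`. -/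
theorem average_over_ball_expansion
    (n : ℕ) (hn : 1 ≤ n) (f : EuclideanSpace ℝ (Fin n) → ℝ)
    (x : EuclideanSpace ℝ (Fin n))
    (U : Set (EuclideanSpace ℝ (Fin n))) (hU : U ∈ nhds x) (hf : ContDiffOn ℝ 2 f U) :
    (fun ε : ℝ =>
      (⨍ y in ball x ε, f y) -
        (f x + ε ^ 2 / (2 * ((n : ℝ) + 2)) *
          ∑ i : Fin n, fderiv ℝ (fderiv ℝ f) x
            (EuclideanSpace.single i 1) (EuclideanSpace.single i 1)))
      =o[𝓝[>] (0 : ℝ)] (fun ε => ε ^ 2) :=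
  average_over_ball_expansion_general n f x U hU hf
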